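/- Let A ∈ M_d(ℤ) ∩ GL_d(ℝ) be a hyperbolic integer matrix whose characteristic polynomial is irreducible over ℚ. Let E^s(A) = {v ∈ ℝ^d : A^k v → 0 as k → +∞} and E^u(A) = {v ∈ ℝ^d : A^{-k} v → 0 as k → +∞}, so that ℝ^d = E^s(A) ⊕ E^u(A). Then for all x, y ∈ ℝ^d there exists a sequence n_m ∈ A^m ℤ^d such that the E^s(A)-component (with respect to this splitting) of y + n_m − x tends to 0 as m → +∞; equivalently, dist(y + n_m, x + E^u(A)) → 0. -/

import Mathlib

/-!
Let `G` be the closure of `ℤ^d + E^u` and `V` the largest linear subspace contained in `G`.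
Transversally to `V` the group `G` is discrete, so if `V` met `ℤ^d` only in `0`, projecting `ℤ^d`
to `Vᗮ` would give a discrete subgroup of rank `d` in a space of dimension `< d`. But
`V ⊇ E^u ≠ 0`: `|det A| ≥ 1` and no eigenvalue lies on the unit circle, so some eigenvalue has
modulus `> 1`. Hence `V` contains a nonzero integer vector; `V` is `A`-invariant, and as the
characteristic polynomial is irreducible over `ℚ`, the only `A`-invariant rational subspace
containing it is `ℚ^d`. So `V = ℝ^d` and `ℤ^d + E^u` is dense; its image `A^m ℤ^d + E^u` under
`A^m` is dense as well, which yields points of `y + A^m ℤ^d` within `1/(m+1)` of `x + E^u`.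
-/

/-- A vector of integers viewed as a point of `ℝ^d`. -/
noncomputable def intVec {d : ℕ} (n : Fin d → ℤ) : EuclideanSpace ℝ (Fin d) :=
  WithLp.toLp 2 fun i => (n i : ℝ)

/-- Matrix-vector multiplication, viewed as a map of `ℝ^d = EuclideanSpace ℝ (Fin d)`. -/
noncomputable def mulVecE {d : ℕ} (A : Matrix (Fin d) (Fin d) ℝ)
    (x : EuclideanSpace ℝ (Fin d)) : EuclideanSpace ℝ (Fin d) :=
  WithLp.toLp 2 (A.mulVec x)

open Filter Topology Module Polynomial Matrix

namespace AddSubgroup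

section Lineality

variable {E : Type*} [AddCommGroup E] [Module ℝ E] (G : AddSubgroup E)

/-- The largest real subspace contained in `G`. -/
def linealitySpace : Submodule ℝ E where
  carrier := {v | ∀ t : ℝ, t • v ∈ G}
  add_mem' ha hb t := by rw [smul_add]; exact G.add_mem (ha t) (hb t)
  zero_mem' t := by rw [smul_zero]; exact G.zero_mem
  smul_mem' c _ hv t := by rw [smul_smul]; exact hv (t * c)

theorem mem_of_mem_linealitySpace {v : E} (hv : v ∈ G.linealitySpace) : v ∈ G := by
  simpa using hv 1

theorem le_linealitySpace {W : Submodule ℝ E} (hW : W.toAddSubgroup ≤ G) :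
    W ≤ G.linealitySpace :=
  fun _ hw t => hW (W.smul_mem t hw)

theorem mapsTo_linealitySpace {f : E →ₗ[ℝ] E} (hf : Set.MapsTo f G G) :
    Set.MapsTo f G.linealitySpace G.linealitySpace :=
  fun _ hv t => by rw [← map_smul]; exact hf (hv t)

end Lineality

theorem smul_mem_of_tendsto_normalize {E : Type*} [NormedAddCommGroup E] [NormedSpace ℝ E]
    {G : AddSubgroup E} (hG : IsClosed (G : Set E)) {g : ℕ → E}
    (hgG : ∀ n, g n ∈ G) (hg0 : ∀ n, g n ≠ 0) (hlim : Tendsto g atTop (𝓝 0)) {e : E}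
    (he : Tendsto (fun n => ‖g n‖⁻¹ • g n) atTop (𝓝 e)) (t : ℝ) : t • e ∈ G := by
  have hr : ∀ n, 0 < ‖g n‖ := fun n => norm_pos_iff.2 (hg0 n)
  -- `⌊t / ‖g n‖⌋ • g n ∈ G` approximates `t • e`
  have hfloor : Tendsto (fun n => (⌊t / ‖g n‖⌋ : ℝ) * ‖g n‖) atTop (𝓝 t) := by
    have : Tendsto (fun n => t - (⌊t / ‖g n‖⌋ : ℝ) * ‖g n‖) atTop (𝓝 0) :=
      squeeze_zero (fun n => Int.sub_floor_div_mul_nonneg t (hr n))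
        (fun n => (Int.sub_floor_div_mul_lt t (hr n)).le) (by simpa using hlim.norm)
    simpa using (tendsto_const_nhds (x := t)).sub this
  refine hG.mem_of_tendsto (hfloor.smul he) (Eventually.of_forall fun n => ?_)
  rw [smul_smul, mul_assoc, mul_inv_cancel₀ (hr n).ne', mul_one, Int.cast_smul_eq_zsmul]
  exact G.zsmul_mem (hgG n) _

section Closed

variable {E : Type*} [NormedAddCommGroup E] [InnerProductSpace ℝ E] [FiniteDimensional ℝ E]
  {G : AddSubgroup E}

theorem exists_pos_le_norm_of_mem_orthogonal (hG : IsClosed (G : Set E)) :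
    ∃ r > 0, ∀ g ∈ G, g ∈ G.linealitySpaceᗮ → g ≠ 0 → r ≤ ‖g‖ := by
  by_contra! h
  choose g hgG hgV hg0 hsmall using fun n : ℕ => h (1 / (n + 1)) Nat.one_div_pos_of_nat
  have hlim : Tendsto g atTop (𝓝 0) :=
    squeeze_zero_norm (fun n => (hsmall n).le) tendsto_one_div_add_atTop_nhds_zero_nat
  obtain ⟨e, he1, φ, hφ, he⟩ := (isCompact_sphere (0 : E) 1).tendsto_subseq
    (x := fun n => ‖g n‖⁻¹ • g n) fun n => by simp [norm_smul, hg0 n]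
  have heV : e ∈ G.linealitySpace := smul_mem_of_tendsto_normalize hG (fun n => hgG (φ n))
    (fun n => hg0 (φ n)) (hlim.comp hφ.tendsto_atTop) he
  have heV' : e ∈ G.linealitySpaceᗮ := (Submodule.isClosed_orthogonal _).mem_of_tendsto he
    (Eventually.of_forall fun n => Submodule.smul_mem _ _ (hgV (φ n)))
  have : e = 0 := inner_self_eq_zero.mp ((Submodule.mem_orthogonal _ _).mp heV' e heV)
  simp [this] at he1

theorem exists_ne_zero_mem_linealitySpace (hG : IsClosed (G : Set E)) {L : Submodule ℤ E}
    (hLG : ∀ l ∈ L, l ∈ G) (hL : finrank ℤ L = finrank ℝ E) (hV : G.linealitySpace ≠ ⊥) :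
    ∃ l ∈ L, l ≠ 0 ∧ l ∈ G.linealitySpace := by
  by_contra! hLV
  set V := G.linealitySpace
  obtain ⟨r, hr, hsep⟩ := exists_pos_le_norm_of_mem_orthogonal hG
  -- project `L` onto `Vᗮ` along `V`: the image lies in the discrete part `G ∩ Vᗮ`
  let q : E →ₗ[ℤ] E := (LinearMap.id - V.starProjection.toLinearMap).restrictScalars ℤ
  have hq : ∀ x, q x = x - V.starProjection x := fun _ => rfl
  let M := LinearMap.range (q ∘ₗ L.subtype)
  have hMV : ∀ m ∈ M, m ∈ Vᗮ := by
    rintro _ ⟨l, rfl⟩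
    exact V.sub_starProjection_mem_orthogonal l
  have hMG : ∀ m ∈ M, m ∈ G := by
    rintro _ ⟨l, rfl⟩
    exact G.sub_mem (hLG l l.2) (mem_of_mem_linealitySpace G (V.starProjection_apply_mem l))
  have hinj : Function.Injective (q ∘ₗ L.subtype) := by
    rw [← LinearMap.ker_eq_bot, LinearMap.ker_eq_bot']
    intro l hl
    by_contra hl0
    refine hLV l l.2 (by simpa using hl0) ?_
    rw [LinearMap.comp_apply, hq, sub_eq_zero, Submodule.subtype_apply] at hl
    exact hl ▸ V.starProjection_apply_mem l
  have : DiscreteTopology (Submodule.span ℤ (M : Set E)) := by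
    rw [Submodule.span_eq]
    exact DiscreteTopology.of_forall_le_norm hr fun m hm =>
      hsep m (hMG m m.2) (hMV m m.2) (by simpa using hm)
  have hrankM : Set.finrank ℝ (M : Set E) = finrank ℝ E := by
    rw [Real.finrank_eq_int_finrank_of_discrete this, Set.finrank, Submodule.span_eq,
      LinearMap.finrank_range_of_inj hinj, hL]
  have hle : Set.finrank ℝ (M : Set E) ≤ finrank ℝ Vᗮ :=
    Submodule.finrank_mono (Submodule.span_le.2 hMV)
  have hsum := V.finrank_add_finrank_orthogonal
  have hV0 : finrank ℝ V ≠ 0 := fun h => hV (Submodule.finrank_eq_zero.mp h)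
  omega

end Closed

end AddSubgroup

theorem Submodule.eq_top_of_mapsTo_of_irreducible_charpoly {K M : Type*} [Field K]
    [AddCommGroup M] [Module K M] [FiniteDimensional K M] {f : Module.End K M}
    (hf : Irreducible f.charpoly) {W : Submodule K M} (hW : Set.MapsTo f W W) {w : M}
    (hw : w ∈ W) (hw0 : w ≠ 0) : W = ⊤ := by
  set n := f.charpoly.natDegree
  let ψ : K[X] →ₗ[K] M := LinearMap.applyₗ w ∘ₗ (aeval f).toLinearMap
  have hψ : ∀ p, ψ p = aeval f p w := fun _ => rfl
  have hψW : ∀ p, ψ p ∈ W := by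
    intro p
    rw [hψ, aeval_eq_sum_range, LinearMap.sum_apply]
    refine Submodule.sum_mem _ fun k _ => W.smul_mem _ ?_
    rw [Module.End.pow_apply]
    exact (hW.iterate k) hw
  -- a nonzero `p` of degree `< n` is coprime to the irreducible `charpoly`, so `p(f) w ≠ 0`
  have hinj : Function.Injective (ψ ∘ₗ (degreeLT K n).subtype) := by
    rw [← LinearMap.ker_eq_bot, LinearMap.ker_eq_bot']
    rintro ⟨p, hp⟩ hpw
    by_contra hp0
    have hp0 : p ≠ 0 := fun h => hp0 (Subtype.ext h)
    have hndvd : ¬ f.charpoly ∣ p := fun hdvd =>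
      hp0 (eq_zero_of_dvd_of_degree_lt hdvd
        ((mem_degreeLT.1 hp).trans_eq (degree_eq_natDegree f.charpoly_monic.ne_zero).symm))
    obtain ⟨a, b, hab⟩ := hf.coprime_iff_not_dvd.2 hndvd
    have := congrArg (fun q => aeval f q w) hab
    simp only [map_add, map_mul, map_one, LinearMap.aeval_self_charpoly, Module.End.mul_apply,
      mul_zero, zero_add, Module.End.one_apply] at this
    exact hw0 (by rw [← this, show aeval f p w = 0 from hpw, map_zero])
  refine Submodule.eq_top_of_finrank_eq (le_antisymm (Submodule.finrank_le _) ?_)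
  calc finrank K M = finrank K (degreeLT K n) := by
        rw [(degreeLTEquiv K n).finrank_eq, finrank_fin_fun]
        exact (LinearMap.charpoly_natDegree f).symm
    _ = finrank K (LinearMap.range (ψ ∘ₗ (degreeLT K n).subtype)) :=
        (LinearMap.finrank_range_of_inj hinj).symm
    _ ≤ finrank K W := Submodule.finrank_mono (LinearMap.range_le_iff_comap.2 (by
        ext p; simp [hψW]))

namespace ContinuousLinearMap

variable {𝕜 E : Type*} [NormedField 𝕜] [NormedAddCommGroup E] [NormedSpace 𝕜 E] (f : E →L[𝕜] E)

def stableSubspace : Submodule 𝕜 E where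
  carrier := {v | Tendsto (fun k : ℕ => (f ^ k) v) atTop (𝓝 0)}
  add_mem' ha hb := by simpa only [Set.mem_ofPred_eq, map_add, add_zero] using ha.add hb
  zero_mem' := by simpa only [Set.mem_ofPred_eq, map_zero] using tendsto_const_nhds
  smul_mem' c _ hv := by simpa only [Set.mem_ofPred_eq, map_smul, smul_zero] using hv.const_smul c

theorem mem_stableSubspace {v : E} :
    v ∈ f.stableSubspace ↔ Tendsto (fun k : ℕ => (f ^ k) v) atTop (𝓝 0) := Iff.rfl

theorem mapsTo_stableSubspace {f g : E →L[𝕜] E} (hfg : Commute f g) :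
    Set.MapsTo g f.stableSubspace f.stableSubspace := by
  intro v hv
  have := (g.continuous.tendsto 0).comp hv
  rw [map_zero] at this
  exact this.congr fun k => (DFunLike.congr_fun (hfg.pow_left k).eq v).symm

end ContinuousLinearMap

theorem norm_multiset_prod_lt_one {R : Type*} [NormedField R] {s : Multiset R} (hs : s ≠ 0)
    (h : ∀ z ∈ s, ‖z‖ < 1) : ‖s.prod‖ < 1 := by
  induction s using Multiset.induction_on with
  | empty => contradiction
  | cons a s ih =>
    have ha := h a (Multiset.mem_cons_self a s)
    have hs : ‖s.prod‖ ≤ 1 := by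
      rcases eq_or_ne s 0 with rfl | hs0
      · simp
      · exact (ih hs0 fun z hz => h z (Multiset.mem_cons_of_mem hz)).le
    rw [Multiset.prod_cons, norm_mul]
    calc ‖a‖ * ‖s.prod‖ ≤ ‖a‖ * 1 := by gcongr
      _ < 1 := by rwa [mul_one]

namespace Matrix

variable {n : Type*} [Fintype n] [DecidableEq n]

theorem exists_isRoot_charpoly_one_lt_norm [Nonempty n] (M : Matrix n n ℂ) (hdet : 1 ≤ ‖M.det‖)
    (hM : ∀ μ : ℂ, M.charpoly.IsRoot μ → ‖μ‖ ≠ 1) :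
    ∃ μ : ℂ, M.charpoly.IsRoot μ ∧ 1 < ‖μ‖ := by
  by_contra! h
  obtain ⟨μ, hμ⟩ := Complex.exists_root (f := M.charpoly)
    (by rw [charpoly_degree_eq_dim]; exact_mod_cast Fintype.card_pos)
  have hroots : M.charpoly.roots ≠ 0 :=
    fun h0 => by simpa [h0] using (mem_roots M.charpoly_monic.ne_zero).2 hμ
  have := norm_multiset_prod_lt_one hroots fun z hz =>
    have hz := isRoot_of_mem_roots hz
    (h z hz).lt_of_ne (hM z hz)
  rw [← det_eq_prod_roots_charpoly] at this
  linarith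

theorem toLp_re_mem_stableSubspace (M : Matrix n n ℝ) {w : n → ℂ} {μ : ℂ}
    (hw : M.map (↑) *ᵥ w = μ • w) (hμ : ‖μ‖ < 1) :
    WithLp.toLp 2 (fun i => (w i).re) ∈ (toEuclideanCLM (𝕜 := ℝ) M).stableSubspace := by
  have hre : ∀ N : Matrix n n ℝ, N *ᵥ (fun i => (w i).re) = fun i => (N.map (↑) *ᵥ w) i |>.re := by
    intro N; ext i; simp [mulVec, dotProduct, Complex.re_sum]
  have hpow : ∀ k : ℕ, (M ^ k).map (↑) *ᵥ w = μ ^ k • w := by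
    intro k
    rw [show (M ^ k).map ((↑) : ℝ → ℂ) = M.map (↑) ^ k from M.map_pow Complex.ofRealHom k]
    induction k with
    | zero => simp
    | succ k ih => rw [pow_succ', ← mulVec_mulVec, ih, mulVec_smul, hw, smul_smul, ← pow_succ]
  have hcont : Continuous fun c : ℂ =>
      (WithLp.toLp 2 (fun i => (c * w i).re) : EuclideanSpace ℝ n) :=
    (PiLp.continuous_toLp 2 _).comp (by fun_prop)
  rw [ContinuousLinearMap.mem_stableSubspace]
  convert (hcont.tendsto 0).comp (tendsto_pow_atTop_nhds_zero_of_norm_lt_one hμ) using 1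
  · ext k : 1
    rw [← map_pow, toEuclideanCLM_toLp, hre, hpow]
    rfl
  · simp only [zero_mul, Complex.zero_re]
    rfl

theorem surjective_toEuclideanCLM {M : Matrix n n ℝ} (hM : IsUnit M.det) :
    Function.Surjective (toEuclideanCLM (𝕜 := ℝ) M) := fun v =>
  ⟨toEuclideanCLM (𝕜 := ℝ) M⁻¹ v, by
    show (toEuclideanCLM (𝕜 := ℝ) M * toEuclideanCLM (𝕜 := ℝ) M⁻¹) v = v
    rw [← map_mul, mul_nonsing_inv M hM, map_one]
    rfl⟩

/-- The unstable subspace `E^u(M) = {v | M⁻ᵏ v → 0}`. -/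
noncomputable def unstableSubspace (M : Matrix n n ℝ) : Submodule ℝ (EuclideanSpace ℝ n) :=
  (toEuclideanCLM (𝕜 := ℝ) M⁻¹).stableSubspace

theorem mapsTo_unstableSubspace (M : Matrix n n ℝ) :
    Set.MapsTo (toEuclideanCLM (𝕜 := ℝ) M) M.unstableSubspace M.unstableSubspace :=
  ContinuousLinearMap.mapsTo_stableSubspace
    ((show Commute M⁻¹ M from (by simpa using pow_inv_comm' M 1 1 : M⁻¹ * M = M * M⁻¹)).map
      toEuclideanCLM)

theorem exists_ne_zero_mem_unstableSubspace [Nonempty n] (M : Matrix n n ℝ) (hdet : 1 ≤ |M.det|)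
    (hM : ∀ μ : ℂ, (M.map (↑)).charpoly.IsRoot μ → ‖μ‖ ≠ 1) :
    ∃ v ≠ 0, v ∈ M.unstableSubspace := by
  have hdetC : ‖(M.map ((↑) : ℝ → ℂ)).det‖ = |M.det| := by
    rw [← Real.norm_eq_abs, ← Complex.norm_real]
    exact congrArg _ (Complex.ofRealHom.map_det M).symm
  obtain ⟨μ, hμ, hμ1⟩ := exists_isRoot_charpoly_one_lt_norm _ (hdetC ▸ hdet) hM
  obtain ⟨w, hw⟩ := ((Module.End.hasEigenvalue_iff_isRoot_charpoly
    (toLin' (M.map ((↑) : ℝ → ℂ))) μ).2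
    (by rwa [charpoly_toLin'])).exists_hasEigenvector
  have hMw : M.map (↑) *ᵥ w = μ • w := by simpa using hw.apply_eq_smul
  have hμ0 : μ ≠ 0 := by rintro rfl; norm_num at hμ1
  have hinv : M⁻¹.map (↑) *ᵥ w = μ⁻¹ • w := by
    have hM1 : M⁻¹ * M = 1 :=
      nonsing_inv_mul M (isUnit_iff_ne_zero.2 fun h => by norm_num [h] at hdet)
    have hmap : M⁻¹.map (↑) * M.map (↑) = (1 : Matrix n n ℂ) :=
      calc _ = Complex.ofRealHom.mapMatrix (M⁻¹ * M) := (map_mul _ _ _).symm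
        _ = 1 := by rw [hM1, map_one]
    have : M⁻¹.map (↑) *ᵥ (M.map (↑) *ᵥ w) = w := by rw [mulVec_mulVec, hmap, one_mulVec]
    rw [hMw, mulVec_smul] at this
    exact (eq_inv_smul_iff₀ hμ0).2 this
  obtain ⟨i, hi⟩ := Function.ne_iff.1 hw.2
  obtain ⟨c, hc⟩ : ∃ c : ℂ, (c * w i).re ≠ 0 := by
    by_cases hre : (w i).re = 0
    · exact ⟨Complex.I, by simpa [hre, Complex.ext_iff] using hi⟩
    · exact ⟨1, by simpa using hre⟩
  refine ⟨WithLp.toLp 2 fun j => ((c • w) j).re, fun h => hc (by simpa using congr($h i)), ?_⟩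
  exact toLp_re_mem_stableSubspace M⁻¹ (by rw [mulVec_smul, hinv, smul_comm])
    (by rw [norm_inv]; exact inv_lt_one_of_one_lt₀ hμ1)

end Matrix

section IntegerMatrix

variable {d : ℕ}

theorem mulVecE_pow (M : Matrix (Fin d) (Fin d) ℝ) (k : ℕ) (v : EuclideanSpace ℝ (Fin d)) :
    mulVecE (M ^ k) v = (toEuclideanCLM (𝕜 := ℝ) M ^ k) v := by
  rw [← map_pow]
  rfl

theorem Matrix.mem_unstableSubspace_iff (M : Matrix (Fin d) (Fin d) ℝ)
    {v : EuclideanSpace ℝ (Fin d)} :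
    v ∈ M.unstableSubspace ↔ Tendsto (fun k : ℕ => mulVecE (M⁻¹ ^ k) v) atTop (𝓝 0) := by
  simp only [mulVecE_pow]
  rfl

theorem toEuclideanCLM_map_intVec (A : Matrix (Fin d) (Fin d) ℤ) (n : Fin d → ℤ) :
    toEuclideanCLM (𝕜 := ℝ) (A.map (↑)) (intVec n) = intVec (A *ᵥ n) := by
  ext i
  exact ((Int.castRingHom ℝ).map_mulVec A n i).symm

noncomputable def intVecLinearMap (d : ℕ) : (Fin d → ℤ) →ₗ[ℤ] EuclideanSpace ℝ (Fin d) where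
  toFun := intVec
  map_add' _ _ := by ext; simp [intVec]
  map_smul' _ _ := by ext; simp [intVec]

noncomputable def intLattice (d : ℕ) : Submodule ℤ (EuclideanSpace ℝ (Fin d)) :=
  LinearMap.range (intVecLinearMap d)

theorem finrank_intLattice : finrank ℤ (intLattice d) = d := by
  rw [intLattice, LinearMap.finrank_range_of_inj, finrank_fin_fun]
  intro a b h
  funext i
  simpa [intVecLinearMap, intVec] using congr(($h) i)

noncomputable def ratVecLinearMap (d : ℕ) : (Fin d → ℚ) →ₗ[ℚ] EuclideanSpace ℝ (Fin d) where
  toFun q := WithLp.toLp 2 fun i => (q i : ℝ)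
  map_add' _ _ := by ext; simp
  map_smul' _ _ := by ext; simp [Rat.smul_def]

theorem eq_top_of_mapsTo_of_intVec_mem (A : Matrix (Fin d) (Fin d) ℤ)
    (hirr : Irreducible (A.map ((↑) : ℤ → ℚ)).charpoly) {V : Submodule ℝ (EuclideanSpace ℝ (Fin d))}
    (hV : Set.MapsTo (toEuclideanCLM (𝕜 := ℝ) (A.map (↑))) V V) {n : Fin d → ℤ}
    (hn : intVec n ∈ V) (hn0 : n ≠ 0) : V = ⊤ := by
  set c := ratVecLinearMap d
  have hc : ∀ q, c (A.map (↑) *ᵥ q) = toEuclideanCLM (𝕜 := ℝ) (A.map (↑)) (c q) := by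
    intro q
    ext i
    have := (Rat.castHom ℝ).map_mulVec (A.map ((↑) : ℤ → ℚ)) q i
    simp only [Matrix.map_map] at this
    exact this
  -- the rational points of `V` form an invariant subspace of `ℚ^d` containing `n`
  have hW : (V.restrictScalars ℚ).comap c = ⊤ := by
    refine Submodule.eq_top_of_mapsTo_of_irreducible_charpoly
      (f := toLin' (A.map ((↑) : ℤ → ℚ))) (by rwa [charpoly_toLin']) (w := fun i => (n i : ℚ))
      (fun q hq => ?_) ?_ ?_
    · simpa [hc] using hV hq
    · rw [Submodule.mem_comap, Submodule.restrictScalars_mem]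
      convert hn using 1
      ext i; simp [c, ratVecLinearMap, intVec]
    · exact fun h => hn0 (funext fun i => by simpa using congrFun h i)
  rw [eq_top_iff, ← (EuclideanSpace.basisFun (Fin d) ℝ).toBasis.span_eq, Submodule.span_le]
  rintro _ ⟨i, rfl⟩
  have : c (Pi.single i 1) ∈ V := (hW.symm ▸ Submodule.mem_top : Pi.single i 1 ∈ _)
  rw [SetLike.mem_coe]
  convert this using 1
  ext j
  simp only [c, ratVecLinearMap, LinearMap.coe_mk, AddHom.coe_mk, Pi.single_apply]
  split_ifs <;> simp_all

theorem one_le_abs_det_map_intCast {A : Matrix (Fin d) (Fin d) ℤ}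
    (hdet : (A.map ((↑) : ℤ → ℝ)).det ≠ 0) : 1 ≤ |(A.map ((↑) : ℤ → ℝ)).det| := by
  have h : (A.map ((↑) : ℤ → ℝ)).det = (A.det : ℝ) := ((Int.castRingHom ℝ).map_det A).symm
  rw [h] at hdet ⊢
  exact_mod_cast Int.one_le_abs (by exact_mod_cast hdet)

theorem dense_intLattice_sup_unstableSubspace (A : Matrix (Fin d) (Fin d) ℤ)
    (hdet : (A.map ((↑) : ℤ → ℝ)).det ≠ 0)
    (hhyp : ∀ μ : ℂ, (A.map ((↑) : ℤ → ℂ)).charpoly.IsRoot μ → ‖μ‖ ≠ 1)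
    (hirr : Irreducible (A.map ((↑) : ℤ → ℚ)).charpoly) :
    Dense (((intLattice d).toAddSubgroup ⊔
      (A.map ((↑) : ℤ → ℝ)).unstableSubspace.toAddSubgroup : AddSubgroup _) :
        Set (EuclideanSpace ℝ (Fin d))) := by
  have hd : d ≠ 0 := by
    rintro rfl
    exact hirr.not_isUnit (by simp [charpoly])
  have : Nonempty (Fin d) := ⟨⟨0, Nat.pos_of_ne_zero hd⟩⟩
  set B := A.map ((↑) : ℤ → ℝ)
  set T := toEuclideanCLM (𝕜 := ℝ) B
  set H := (intLattice d).toAddSubgroup ⊔ B.unstableSubspace.toAddSubgroup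
  set G := H.topologicalClosure
  have hHG := H.le_topologicalClosure
  have hTH : Set.MapsTo T H H := by
    intro g hg
    obtain ⟨_, ⟨n, rfl⟩, u, hu, rfl⟩ := AddSubgroup.mem_sup.1 hg
    rw [map_add]
    exact H.add_mem (AddSubgroup.mem_sup_left ⟨A *ᵥ n, (toEuclideanCLM_map_intVec A n).symm⟩)
      (AddSubgroup.mem_sup_right (B.mapsTo_unstableSubspace hu))
  have hTG : Set.MapsTo T G G := fun g hg => map_mem_closure T.continuous hg hTH
  have hUV : B.unstableSubspace ≤ G.linealitySpace :=
    G.le_linealitySpace (le_sup_right.trans hHG)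
  obtain ⟨u, hu0, hu⟩ := B.exists_ne_zero_mem_unstableSubspace (one_le_abs_det_map_intCast hdet)
    (by simpa [B, Matrix.map_map, Function.comp_def] using hhyp)
  obtain ⟨_, ⟨n, rfl⟩, hn0, hnV⟩ := G.exists_ne_zero_mem_linealitySpace
    H.isClosed_topologicalClosure (fun l hl => hHG (AddSubgroup.mem_sup_left hl))
    (by rw [finrank_intLattice, finrank_euclideanSpace_fin])
    (fun h => hu0 (by simpa [h] using hUV hu))
  have hV : G.linealitySpace = ⊤ := eq_top_of_mapsTo_of_intVec_mem A hirr
    (G.mapsTo_linealitySpace (f := T.toLinearMap) hTG) hnV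
    (by rintro rfl; exact hn0 (map_zero _))
  rw [dense_iff_closure_eq, ← H.topologicalClosure_coe, Set.eq_univ_iff_forall]
  exact fun z => G.mem_of_mem_linealitySpace (hV ▸ Submodule.mem_top)

-- `A^m ℤ^d + E^u` is the image of the dense group `ℤ^d + E^u` under `A^m`
theorem exists_infDist_intVec_lt (A : Matrix (Fin d) (Fin d) ℤ)
    (hdet : (A.map ((↑) : ℤ → ℝ)).det ≠ 0)
    (hhyp : ∀ μ : ℂ, (A.map ((↑) : ℤ → ℂ)).charpoly.IsRoot μ → ‖μ‖ ≠ 1)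
    (hirr : Irreducible (A.map ((↑) : ℤ → ℚ)).charpoly) (x y : EuclideanSpace ℝ (Fin d)) (m : ℕ)
    {ε : ℝ} (hε : 0 < ε) :
    ∃ n : Fin d → ℤ, Metric.infDist (y + mulVecE (A.map (↑) ^ m) (intVec n))
      {z | z - x ∈ (A.map ((↑) : ℤ → ℝ)).unstableSubspace} < ε := by
  set B := A.map ((↑) : ℤ → ℝ)
  set T := toEuclideanCLM (𝕜 := ℝ) B
  have hsurj : Function.Surjective (T ^ m) := by
    rw [← map_pow]
    exact surjective_toEuclideanCLM (by rw [det_pow]; exact (Ne.isUnit hdet).pow m)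
  obtain ⟨_, ⟨g, hg, rfl⟩, hdist⟩ := (hsurj.denseRange.dense_image (T ^ m).continuous
    (dense_intLattice_sup_unstableSubspace A hdet hhyp hirr)).exists_dist_lt (x - y) hε
  obtain ⟨_, ⟨n, rfl⟩, u, hu, rfl⟩ := AddSubgroup.mem_sup.1 hg
  have hTu : (T ^ m) u ∈ B.unstableSubspace := by
    rw [FunLike.coe_pow_eq_iterate]
    exact (B.mapsTo_unstableSubspace.iterate m) hu
  refine ⟨n, (Metric.infDist_le_dist_of_mem (y := x - (T ^ m) u) ?_).trans_lt ?_⟩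
  · rw [Set.mem_ofPred_eq, sub_sub_cancel_left]
    exact B.unstableSubspace.neg_mem hTu
  · calc dist (y + mulVecE (B ^ m) (intVec n)) (x - (T ^ m) u)
        = dist (x - y) ((T ^ m) (intVecLinearMap d n + u)) := by
          rw [mulVecE_pow, map_add, dist_eq_norm, dist_eq_norm, ← norm_neg]
          congr 1
          simp only [intVecLinearMap, LinearMap.coe_mk, AddHom.coe_mk]
          abel
      _ < ε := hdist

end IntegerMatrix

/-- Let `A ∈ M_d(ℤ) ∩ GL_d(ℝ)` be hyperbolic with characteristic
polynomial irreducible over `ℚ`, and let `E^u(A) = {v : A^(-k) v → 0}` be the unstable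
subspace. Then for all `x, y ∈ ℝ^d` there exists a sequence `n_m ∈ A^m ℤ^d` such that
`dist (y + n_m, x + E^u(A)) → 0` as `m → ∞` (equivalently, the `E^s(A)`-component of
`y + n_m - x` tends to `0`). -/
theorem stmt13 (d : ℕ) (A : Matrix (Fin d) (Fin d) ℤ)
    (hdet : (A.map ((↑) : ℤ → ℝ)).det ≠ 0)
    (hhyp : ∀ μ : ℂ, (Matrix.charpoly (A.map ((↑) : ℤ → ℂ))).IsRoot μ → ‖μ‖ ≠ 1)
    (hirr : Irreducible (Matrix.charpoly (A.map ((↑) : ℤ → ℚ)))) :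
    ∀ x y : EuclideanSpace ℝ (Fin d),
      ∃ ns : ℕ → EuclideanSpace ℝ (Fin d),
        (∀ m : ℕ, ∃ n : Fin d → ℤ, ns m = mulVecE ((A.map ((↑) : ℤ → ℝ)) ^ m) (intVec n)) ∧
        Filter.Tendsto
          (fun m : ℕ =>
            Metric.infDist (y + ns m)
              {z : EuclideanSpace ℝ (Fin d) |
                Filter.Tendsto
                  (fun k : ℕ => mulVecE ((A.map ((↑) : ℤ → ℝ))⁻¹ ^ k) (z - x))
                  Filter.atTop (nhds 0)})
          Filter.atTop (nhds 0) := by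
  intro x y
  have hS : {z | Tendsto (fun k : ℕ => mulVecE ((A.map ((↑) : ℤ → ℝ))⁻¹ ^ k) (z - x)) atTop (𝓝 0)}
      = {z | z - x ∈ (A.map ((↑) : ℤ → ℝ)).unstableSubspace} := by
    ext z
    exact (mem_unstableSubspace_iff _).symm
  choose n hn using fun m : ℕ =>
    exists_infDist_intVec_lt A hdet hhyp hirr x y m (Nat.one_div_pos_of_nat (n := m))
  refine ⟨fun m => mulVecE (A.map (↑) ^ m) (intVec (n m)), fun m => ⟨n m, rfl⟩, ?_⟩
  rw [hS]
  exact squeeze_zero (fun _ => Metric.infDist_nonneg) (fun m => (hn m).le)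
    tendsto_one_div_add_atTop_nhds_zero_nat
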